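/- For h ∈ (−2,0) with k = √(2+h)/2, the substitution defined by −1/√(q² + 1/4) = (2+h)s² − 2 transforms the integrand via √(h + 1/√(q² + 1/4)) dq = 2k² √(1−s²) / (√(1−k²s²)(1−2k²s²)²) ds, so that ∫₀^{q_max} √(h + 1/√(q²+1/4)) dq = 2k² ∫₀¹ √(1−s²) / (√(1−k²s²)(1−2k²s²)²) ds. -/

import Mathlib

/-!
Write `h = 4k² - 2`. The substitution `q(s) = k s √(1 - k²s²) / (1 - 2k²s²)` is built so that
`q² + 1/4 = 1 / (4 (1 - 2k²s²)²)`; hence `h + 1/√(q² + 1/4) = 4k²(1 - s²)`, the energy vanishes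
exactly at `s = 1`, and `q' = k / (√(1 - k²s²) (1 - 2k²s²)²)`. The change of variables formula
then turns the action integral into the stated integral over `[0, 1]`.
-/

open Real Set

noncomputable def sitnikovSubst (k s : ℝ) : ℝ :=
  k * s * √(1 - k ^ 2 * s ^ 2) / (1 - 2 * k ^ 2 * s ^ 2)

section

variable {k s : ℝ}

lemma sqrt_sitnikovSubst_sq_add (hks : 2 * k ^ 2 * s ^ 2 < 1) :
    √(sitnikovSubst k s ^ 2 + 1 / 4) = 1 / (2 * (1 - 2 * k ^ 2 * s ^ 2)) := by
  have hD : 0 < 1 - 2 * k ^ 2 * s ^ 2 := by linarith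
  have hA : 0 ≤ 1 - k ^ 2 * s ^ 2 := by nlinarith [sq_nonneg (k * s)]
  have key : sitnikovSubst k s ^ 2 + 1 / 4 = (1 / (2 * (1 - 2 * k ^ 2 * s ^ 2))) ^ 2 := by
    rw [sitnikovSubst, div_pow, mul_pow, mul_pow, sq_sqrt hA, div_add' _ _ _ (by positivity),
      div_pow, div_eq_div_iff (by positivity) (by positivity)]
    ring
  rw [key, sqrt_sq (by positivity)]

lemma energy_sitnikovSubst (hks : 2 * k ^ 2 * s ^ 2 < 1) :
    4 * k ^ 2 - 2 + 1 / √(sitnikovSubst k s ^ 2 + 1 / 4) = 4 * k ^ 2 * (1 - s ^ 2) := by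
  rw [sqrt_sitnikovSubst_sq_add hks, one_div_one_div]
  ring

lemma sqrt_energy_sitnikovSubst (hk : 0 ≤ k) (hks : 2 * k ^ 2 * s ^ 2 < 1) :
    √(4 * k ^ 2 - 2 + 1 / √(sitnikovSubst k s ^ 2 + 1 / 4)) = 2 * k * √(1 - s ^ 2) := by
  rw [energy_sitnikovSubst hks, show 4 * k ^ 2 * (1 - s ^ 2) = (2 * k) ^ 2 * (1 - s ^ 2) by ring,
    sqrt_mul (by positivity), sqrt_sq (by positivity)]

lemma hasDerivAt_sitnikovSubst (hks : 2 * k ^ 2 * s ^ 2 < 1) :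
    HasDerivAt (sitnikovSubst k)
      (k / (√(1 - k ^ 2 * s ^ 2) * (1 - 2 * k ^ 2 * s ^ 2) ^ 2)) s := by
  have hD : 0 < 1 - 2 * k ^ 2 * s ^ 2 := by linarith
  have hA : 0 < 1 - k ^ 2 * s ^ 2 := by nlinarith [sq_nonneg (k * s)]
  have dA : HasDerivAt (fun y ↦ 1 - k ^ 2 * y ^ 2) (-(k ^ 2 * (2 * s))) s := by
    simpa using ((hasDerivAt_pow 2 s).const_mul (k ^ 2)).const_sub 1
  have dD : HasDerivAt (fun y ↦ 1 - 2 * k ^ 2 * y ^ 2) (-(2 * k ^ 2 * (2 * s))) s := by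
    simpa using ((hasDerivAt_pow 2 s).const_mul (2 * k ^ 2)).const_sub 1
  have dN := ((hasDerivAt_id s).const_mul k).mul (dA.sqrt hA.ne')
  refine (dN.div dD hD.ne').congr_deriv ?_
  simp only [Pi.mul_apply, id]
  field_simp [hD.ne']
  rw [sq_sqrt hA.le]
  ring

lemma sitnikovSubst_zero : sitnikovSubst k 0 = 0 := by
  simp [sitnikovSubst]

lemma sitnikovSubst_one (hk : 0 ≤ k) (hk2 : 2 * k ^ 2 < 1) :
    sitnikovSubst k 1 = √(1 / (4 * k ^ 2 - 2) ^ 2 - 1 / 4) := by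
  have hA : 0 ≤ 1 - k ^ 2 := by nlinarith
  have hD : 0 < 1 - 2 * k ^ 2 := by linarith
  have hh : (4 * k ^ 2 - 2) ^ 2 ≠ 0 := pow_ne_zero 2 (by linarith)
  have hq : sitnikovSubst k 1 = k * √(1 - k ^ 2) / (1 - 2 * k ^ 2) := by simp [sitnikovSubst]
  rw [hq, ← sqrt_sq (div_nonneg (by positivity) hD.le), div_pow, mul_pow, sq_sqrt hA,
    div_sub_div _ _ hh four_ne_zero]
  congr 1
  rw [div_eq_div_iff (by positivity) (mul_ne_zero hh four_ne_zero)]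
  ring

lemma integral_action_eq_integral_sitnikovSubst (hk : 0 ≤ k) (hk2 : 2 * k ^ 2 < 1) :
    ∫ q in (0 : ℝ)..sitnikovSubst k 1, √(4 * k ^ 2 - 2 + 1 / √(q ^ 2 + 1 / 4))
      = 2 * k ^ 2 * ∫ s in (0 : ℝ)..1,
          √(1 - s ^ 2) / (√(1 - k ^ 2 * s ^ 2) * (1 - 2 * k ^ 2 * s ^ 2) ^ 2) := by
  have hks : ∀ x ∈ uIcc (0 : ℝ) 1, 2 * k ^ 2 * x ^ 2 < 1 := fun x hx ↦ by
    rw [uIcc_of_le zero_le_one] at hx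
    have : x ^ 2 ≤ 1 := by nlinarith [hx.1, hx.2]
    nlinarith [mul_le_mul_of_nonneg_left this (sq_nonneg k)]
  have hcont : ContinuousOn
      (fun x ↦ k / (√(1 - k ^ 2 * x ^ 2) * (1 - 2 * k ^ 2 * x ^ 2) ^ 2)) (uIcc 0 1) := by
    refine continuousOn_const.div (by fun_prop) fun x hx ↦ ?_
    have hkx := hks x hx
    have hA : 0 < 1 - k ^ 2 * x ^ 2 := by nlinarith [sq_nonneg (k * x)]
    have hD : 0 < 1 - 2 * k ^ 2 * x ^ 2 := by linarith
    positivity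
  have hg : Continuous fun q : ℝ ↦ √(4 * k ^ 2 - 2 + 1 / √(q ^ 2 + 1 / 4)) :=
    continuous_sqrt.comp <| continuous_const.add <|
      continuous_const.div (by fun_prop) fun q ↦ by positivity
  have hsubst := intervalIntegral.integral_deriv_smul_comp
    (fun x hx ↦ hasDerivAt_sitnikovSubst (hks x hx)) hcont hg
  rw [sitnikovSubst_zero] at hsubst
  rw [← hsubst, ← intervalIntegral.integral_const_mul]
  refine intervalIntegral.integral_congr fun x hx ↦ ?_
  simp only [smul_eq_mul, Function.comp_apply, sqrt_energy_sitnikovSubst hk (hks x hx)]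
  ring

end

theorem stmt_6 (h : ℝ) (hh : h ∈ Ioo (-2 : ℝ) 0)
    (k : ℝ) (hk : k = Real.sqrt (2 + h) / 2)
    (qmax : ℝ) (hq : qmax = Real.sqrt (1 / h^2 - 1/4))
    (qs : ℝ → ℝ)
    (hqs : ∀ s, qs s = k * s * Real.sqrt (1 - k^2 * s^2) / (1 - 2 * k^2 * s^2)) :
    (∀ s ∈ Icc (0 : ℝ) 1,
      -(1 / Real.sqrt ((qs s)^2 + 1/4)) = (2 + h) * s^2 - 2) ∧
    (∀ s ∈ Ioo (0 : ℝ) 1,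
      HasDerivAt qs
        (2 * k^2 * Real.sqrt (1 - s^2) /
          (Real.sqrt (1 - k^2 * s^2) * (1 - 2 * k^2 * s^2)^2) /
          Real.sqrt (h + 1 / Real.sqrt ((qs s)^2 + 1/4))) s) ∧
    (∫ q in (0 : ℝ)..qmax, Real.sqrt (h + 1 / Real.sqrt (q^2 + 1/4)))
      = 2 * k^2 * ∫ s in (0 : ℝ)..1,
          Real.sqrt (1 - s^2) /
            (Real.sqrt (1 - k^2 * s^2) * (1 - 2 * k^2 * s^2)^2) := by
  obtain rfl : qs = sitnikovSubst k := funext hqs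
  have hk0 : 0 < k := hk ▸ div_pos (sqrt_pos.mpr (by linarith [hh.1])) two_pos
  obtain rfl : h = 4 * k ^ 2 - 2 := by
    rw [hk, div_pow, sq_sqrt (by linarith [hh.1])]; ring
  have hk2 : 2 * k ^ 2 < 1 := by linarith [hh.2]
  have hks : ∀ s, s ^ 2 ≤ 1 → 2 * k ^ 2 * s ^ 2 < 1 := fun s hs ↦ by
    nlinarith [mul_le_mul_of_nonneg_left hs (sq_nonneg k)]
  refine ⟨fun s hs ↦ ?_, fun s hs ↦ ?_, ?_⟩
  · rw [sqrt_sitnikovSubst_sq_add (hks s (by nlinarith [hs.1, hs.2])), one_div_one_div]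
    ring
  · have hs2 : s ^ 2 < 1 := by nlinarith [hs.1, hs.2]
    convert hasDerivAt_sitnikovSubst (hks s hs2.le) using 1
    have : 0 < √(1 - s ^ 2) := sqrt_pos.mpr (by linarith)
    rw [sqrt_energy_sitnikovSubst hk0.le (hks s hs2.le)]
    field_simp
  · rw [hq, ← sitnikovSubst_one hk0.le hk2]
    exact integral_action_eq_integral_sitnikovSubst hk0.le hk2
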